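/- arXiv:2402.16941 — 7 statements merged into one kernel-verified Lean document; each statement's English description precedes it below -/
import Mathlib

section
/- Let ρ be a positive definite complex n×n matrix, and let P, Q be orthogonal projection matrices (P² = P = P†, Q² = Q = Q†) with P·Q = 0 and P + Q = I. Set σ = P ρ P + Q ρ Q and assume σ is positive definite. Then the quantum relative entropy of ρ with respect to σ equals the difference of von Neumann entropies: Tr(ρ log ρ) − Tr(ρ log σ) = S(σ) − S(ρ), where S(A) = −Tr(A log A) and log is the matrix logarithm defined via the continuous functional calculus on positive definite matrices. Equivalently, Tr(ρ log σ) = Tr(σ log σ). -/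
open Matrix Polynomial
open scoped ComplexOrder

lemma commute_aeval_of_commute {R A : Type*} [CommSemiring R] [Semiring A] [Algebra R A]
    {a b : A} (h : Commute a b) (q : R[X]) : Commute a (aeval b q) := by
  induction q using Polynomial.induction_on' with
  | add p q hp hq => simpa [map_add] using hp.add_right hq
  | monomial k c =>
    rw [aeval_monomial]
    exact (Algebra.commute_algebraMap_right c a).mul_right (h.pow_right k)

/-- For a matrix (finite real spectrum), `cfc f a` is a polynomial in `a`, hence commutes with
anything commuting with `a`. -/
lemma commute_cfc_of_commute {m : ℕ} {a b : Matrix (Fin m) (Fin m) ℂ}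
    (ha : IsSelfAdjoint a) (h : Commute b a) (f : ℝ → ℝ) : Commute b (cfc f a) := by
  have hfin : (spectrum ℝ a).Finite := a.finite_real_spectrum
  set s : Finset ℝ := hfin.toFinset
  set q : ℝ[X] := Lagrange.interpolate s id f with hq
  have heq : cfc f a = cfc (fun x => q.eval x) a := by
    refine cfc_congr fun x hx => ?_
    exact (Lagrange.eval_interpolate_at_node f (Set.injOn_id _)
      (hfin.mem_toFinset.mpr hx)).symm
  rw [heq, cfc_polynomial (R := ℝ) q a ha]
  exact commute_aeval_of_commute h q

/-- For a positive definite ρ and the pinching σ = PρP + QρQ with respect to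
orthogonal projections P, Q with PQ = 0 and P + Q = I, the quantum relative entropy
D(ρ‖σ) = Tr(ρ log ρ) − Tr(ρ log σ) equals S(σ) − S(ρ), where S(A) = −Tr(A log A) and the
matrix logarithm is defined via the continuous functional calculus; equivalently,
Tr(ρ log σ) = Tr(σ log σ). -/
theorem pinching_relative_entropy_eq_entropy_diff {n : ℕ}
    (ρ P Q σ : Matrix (Fin n) (Fin n) ℂ)
    (hρ : ρ.PosDef)
    (hP_proj : P * P = P) (hP_herm : Pᴴ = P)
    (hQ_proj : Q * Q = Q) (hQ_herm : Qᴴ = Q)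
    (hPQ : P * Q = 0) (hPQ_sum : P + Q = 1)
    (hσ_def : σ = P * ρ * P + Q * ρ * Q)
    (hσ : σ.PosDef) :
    (ρ * cfc Real.log ρ).trace - (ρ * cfc Real.log σ).trace
        = (-(σ * cfc Real.log σ).trace) - (-(ρ * cfc Real.log ρ).trace)
      ∧ (ρ * cfc Real.log σ).trace = (σ * cfc Real.log σ).trace := by
  have hQP : Q * P = 0 := by
    have := congrArg conjTranspose hPQ
    simpa [conjTranspose_mul, hP_herm, hQ_herm] using this
  -- σ commutes with P
  have hcomm : Commute P σ := by
    have h1 : P * σ = P * ρ * P := by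
      rw [hσ_def]
      rw [mul_add]
      rw [show P * (P * ρ * P) = P * ρ * P by
        rw [show P * (P * ρ * P) = (P * P) * ρ * P by noncomm_ring, hP_proj]]
      rw [show P * (Q * ρ * Q) = (P * Q) * ρ * Q by noncomm_ring, hPQ]
      simp
    have h2 : σ * P = P * ρ * P := by
      rw [hσ_def, add_mul]
      rw [show P * ρ * P * P = P * ρ * (P * P) by noncomm_ring, hP_proj]
      rw [show Q * ρ * Q * P = Q * ρ * (Q * P) by noncomm_ring, hQP]
      simp
    exact h1.trans h2.symm
  have hσsa : IsSelfAdjoint σ := hσ.isHermitian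
  set L := cfc Real.log σ with hL
  have hPL : Commute P L := commute_cfc_of_commute hσsa hcomm Real.log
  have hQL : Commute Q L := by
    have hQ1 : Q = 1 - P := by rw [← hPQ_sum]; noncomm_ring
    rw [hQ1]
    exact (Commute.one_left L).sub_left hPL
  -- key trace identity
  have key : (σ * L).trace = (ρ * L).trace := by
    have e1 : σ * L = P * (ρ * L) * P + Q * (ρ * L) * Q := by
      rw [hσ_def, add_mul]
      rw [show P * ρ * P * L = P * ρ * (P * L) by noncomm_ring, hPL.eq,
        show Q * ρ * Q * L = Q * ρ * (Q * L) by noncomm_ring, hQL.eq]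
      noncomm_ring
    rw [e1, trace_add, trace_mul_cycle P (ρ * L) P, trace_mul_cycle Q (ρ * L) Q]
    rw [show P * P * (ρ * L) = (P * P) * (ρ * L) by noncomm_ring, hP_proj,
      show Q * Q * (ρ * L) = (Q * Q) * (ρ * L) by noncomm_ring, hQ_proj]
    rw [← trace_add, ← add_mul, hPQ_sum, one_mul]
  constructor
  · rw [key]; ring
  · exact key.symm
end

section
/- Fix τ > 0 and set λ₀ = e^{−τ}, λ₁ = (1+τ)e^{−τ}. Define for η ∈ (0,1]: Q(η) = 2(1−η)λ₀(1−λ₀) + η(λ₀ + λ₁ − 2λ₀λ₁), c(η) = (λ₀/2)·(1 − (1−η)λ₀ − ηλ₁), E(η) = 2c(η)/Q(η), and the key rate r(η) = Q(η)·(1 − h₂(E(η))), where h₂(x) = −x·log₂ x − (1−x)·log₂(1−x) is the binary entropy with logarithm in base 2. Then lim_{η → 0⁺} r(η)/η² = τ²/((e^τ − 1)·ln 16), where ln denotes the natural logarithm. -/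
/-!
The error parameter satisfies `Q η - 4 c η = η (λ₁ - λ₀)`, so the error rate is
`E η = 1/2 - η (λ₁ - λ₀) / (2 Q η)`: it approaches the useless value `1/2` linearly in `η`.
The binary entropy is flat at `1/2`, `ln 2 - H (1/2 - δ) ~ 2 δ²` (L'Hôpital, since
`H'' (1/2) = -4`), so the key rate `Q (1 - H(E) / ln 2)` is of order `η²`, with constant
`Q 0 · 2 ((λ₁ - λ₀) / (2 Q 0))² / ln 2 = (λ₁ - λ₀)² / (4 λ₀ (1 - λ₀) ln 2)`.
For `λ₀ = e^{-τ}`, `λ₁ - λ₀ = τ e^{-τ}` this is `τ² / ((e^τ - 1) ln 16)`.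
-/

open Filter Real Topology

lemma Real.binEntropy_div_log_two (p : ℝ) :
    binEntropy p / log 2 = -p * logb 2 p - (1 - p) * logb 2 (1 - p) := by
  rw [binEntropy, logb, logb, log_inv, log_inv]
  ring

lemma hasDerivAt_log_two_sub_binEntropy_two_inv_sub {δ : ℝ} (hδ : |δ| < 2⁻¹) :
    HasDerivAt (fun δ => log 2 - binEntropy (2⁻¹ - δ)) (log (2⁻¹ + δ) - log (2⁻¹ - δ)) δ := by
  obtain ⟨hlo, hhi⟩ := abs_lt.mp hδ
  have h := (hasDerivAt_binEntropy (p := 2⁻¹ - δ) (by linarith) (by linarith)).comp δ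
    ((hasDerivAt_id' δ).const_sub 2⁻¹)
  exact (h.const_sub (log 2)).congr_deriv (by ring_nf)

lemma hasDerivAt_log_two_inv_add_sub_log_two_inv_sub :
    HasDerivAt (fun δ : ℝ => log (2⁻¹ + δ) - log (2⁻¹ - δ)) 4 0 := by
  have hadd := ((hasDerivAt_id' (0 : ℝ)).const_add 2⁻¹).log (by norm_num)
  have hsub := ((hasDerivAt_id' (0 : ℝ)).const_sub 2⁻¹).log (by norm_num)
  exact (hadd.fun_sub hsub).congr_deriv (by norm_num)

lemma tendsto_log_two_sub_binEntropy_two_inv_sub_div_sq :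
    Tendsto (fun δ => (log 2 - binEntropy (2⁻¹ - δ)) / δ ^ 2) (𝓝[≠] 0) (𝓝 2) := by
  have hsmall : ∀ᶠ δ in 𝓝[≠] (0 : ℝ), |δ| < 2⁻¹ :=
    eventually_nhdsWithin_of_eventually_nhds
      (continuous_abs.tendsto' 0 0 abs_zero |>.eventually (eventually_lt_nhds (by norm_num)))
  refine HasDerivAt.lhopital_zero_nhdsNE (hsmall.mono fun δ hδ =>
    hasDerivAt_log_two_sub_binEntropy_two_inv_sub hδ)
    (Eventually.of_forall fun δ => hasDerivAt_pow 2 δ) ?_ ?_ ?_ ?_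
  · filter_upwards [self_mem_nhdsWithin] with δ hδ
    simpa using hδ
  · refine tendsto_nhdsWithin_of_tendsto_nhds ?_
    simpa [binEntropy_two_inv] using
      (hasDerivAt_log_two_sub_binEntropy_two_inv_sub (δ := 0) (by norm_num)).continuousAt.tendsto
  · exact tendsto_nhdsWithin_of_tendsto_nhds ((continuous_pow 2).tendsto' 0 0 (by norm_num))
  · have h := hasDerivAt_iff_tendsto_slope.mp hasDerivAt_log_two_inv_add_sub_log_two_inv_sub
    refine ((h.div_const 2).congr' ?_).trans (by norm_num)
    filter_upwards [self_mem_nhdsWithin] with δ hδ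
    simp only [slope_def_field, add_zero, sub_zero, sub_self, Nat.add_one_sub_one, pow_one]
    ring

lemma tendsto_log_two_sub_binEntropy_two_inv_sub_mul_div_sq {m : ℝ → ℝ} {k : ℝ}
    (hm : Tendsto m (𝓝[≠] 0) (𝓝 k)) (hk : k ≠ 0) :
    Tendsto (fun η => (log 2 - binEntropy (2⁻¹ - η * m η)) / η ^ 2) (𝓝[≠] 0) (𝓝 (2 * k ^ 2)) := by
  have hm0 : ∀ᶠ η in 𝓝[≠] 0, m η ≠ 0 := hm.eventually_ne hk
  have hδ : Tendsto (fun η => η * m η) (𝓝[≠] 0) (𝓝[≠] 0) := by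
    refine tendsto_nhdsWithin_iff.mpr ⟨?_, ?_⟩
    · simpa using (tendsto_id.mono_left nhdsWithin_le_nhds).mul hm
    · filter_upwards [self_mem_nhdsWithin, hm0] with η hη hmη using mul_ne_zero hη hmη
  refine ((tendsto_log_two_sub_binEntropy_two_inv_sub_div_sq.comp hδ).mul (hm.pow 2)).congr' ?_
  filter_upwards [self_mem_nhdsWithin, hm0] with η hη hmη
  have hη : η ≠ 0 := hη
  simp only [Function.comp_apply]
  field_simp

namespace HybridBB84

variable (l0 l1 : ℝ)

noncomputable section

def gain (η : ℝ) : ℝ := 2 * (1 - η) * l0 * (1 - l0) + η * (l0 + l1 - 2 * l0 * l1)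

def errorParam (η : ℝ) : ℝ := (l0 / 2) * (1 - (1 - η) * l0 - η * l1)

def qber (η : ℝ) : ℝ := 2 * errorParam l0 l1 η / gain l0 l1 η

def keyRate (η : ℝ) : ℝ := gain l0 l1 η * (1 - binEntropy (qber l0 l1 η) / log 2)

end

lemma gain_sub_four_mul_errorParam (η : ℝ) :
    gain l0 l1 η - 4 * errorParam l0 l1 η = η * (l1 - l0) := by
  unfold gain errorParam
  ring

lemma qber_eq {η : ℝ} (h : gain l0 l1 η ≠ 0) :
    qber l0 l1 η = 2⁻¹ - η * ((l1 - l0) / (2 * gain l0 l1 η)) := by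
  have h2c : 2 * errorParam l0 l1 η = (gain l0 l1 η - η * (l1 - l0)) / 2 := by
    linear_combination (-1 / 2 : ℝ) * gain_sub_four_mul_errorParam l0 l1 η
  rw [qber, h2c]
  field_simp

lemma continuous_gain : Continuous (gain l0 l1) := by
  unfold gain
  fun_prop

lemma gain_zero : gain l0 l1 0 = 2 * l0 * (1 - l0) := by
  simp [gain]

theorem tendsto_keyRate_div_sq (h0 : l0 ≠ 0) (h1 : l0 ≠ 1) (h01 : l1 ≠ l0) :
    Tendsto (fun η => keyRate l0 l1 η / η ^ 2) (𝓝[≠] 0)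
      (𝓝 ((l1 - l0) ^ 2 / (4 * l0 * (1 - l0) * log 2))) := by
  have hlog : log 2 ≠ 0 := by positivity
  have hQ0 : gain l0 l1 0 ≠ 0 := by
    rw [gain_zero]
    exact mul_ne_zero (mul_ne_zero two_ne_zero h0) (sub_ne_zero.mpr h1.symm)
  have hQ : Tendsto (gain l0 l1) (𝓝[≠] 0) (𝓝 (gain l0 l1 0)) :=
    ((continuous_gain l0 l1).tendsto 0).mono_left nhdsWithin_le_nhds
  have hQne : ∀ᶠ η in 𝓝[≠] 0, gain l0 l1 η ≠ 0 := hQ.eventually_ne hQ0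
  have hm : Tendsto (fun η => (l1 - l0) / (2 * gain l0 l1 η)) (𝓝[≠] 0)
      (𝓝 ((l1 - l0) / (2 * gain l0 l1 0))) :=
    tendsto_const_nhds.div (hQ.const_mul 2) (mul_ne_zero two_ne_zero hQ0)
  have hk : (l1 - l0) / (2 * gain l0 l1 0) ≠ 0 :=
    div_ne_zero (sub_ne_zero.mpr h01) (mul_ne_zero two_ne_zero hQ0)
  have hlim := (hQ.div_const (log 2)).mul
    (tendsto_log_two_sub_binEntropy_two_inv_sub_mul_div_sq hm hk)
  convert hlim.congr' ?_ using 2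
  · rw [gain_zero] at hQ0 ⊢
    field_simp
    ring
  · filter_upwards [hQne] with η hη
    rw [keyRate, qber_eq l0 l1 hη]
    generalize binEntropy _ = H
    field_simp

end HybridBB84

/-- For the pure-loss channel with transmissivity η and threshold τ, the key rate
r(η) = Q(η)(1 − h₂(E(η))) satisfies lim_{η→0⁺} r(η)/η² = τ²/((e^τ − 1) ln 16). -/
theorem pure_loss_key_rate_quadratic_scaling (τ : ℝ) (hτ : 0 < τ) :
    let l0 : ℝ := Real.exp (-τ)
    let l1 : ℝ := (1 + τ) * Real.exp (-τ)
    let Q : ℝ → ℝ := fun η => 2 * (1 - η) * l0 * (1 - l0) + η * (l0 + l1 - 2 * l0 * l1)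
    let c : ℝ → ℝ := fun η => (l0 / 2) * (1 - (1 - η) * l0 - η * l1)
    let E : ℝ → ℝ := fun η => 2 * c η / Q η
    let h2 : ℝ → ℝ := fun x => -x * Real.logb 2 x - (1 - x) * Real.logb 2 (1 - x)
    let r : ℝ → ℝ := fun η => Q η * (1 - h2 (E η))
    Tendsto (fun η => r η / η ^ 2) (nhdsWithin 0 (Set.Ioi 0))
      (nhds (τ ^ 2 / ((Real.exp τ - 1) * Real.log 16))) := by
  intro l0 l1 Q c E h2 r
  have hl0 : 0 < l0 := exp_pos _
  have hl0_lt : l0 < 1 := exp_lt_one_iff.mpr (neg_neg_of_pos hτ)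
  have hl1 : l1 - l0 = τ * l0 := by ring
  have hr : ∀ η, r η = HybridBB84.keyRate l0 l1 η := fun η => by
    rw [HybridBB84.keyRate, binEntropy_div_log_two]
    rfl
  have hlimit : τ ^ 2 / ((exp τ - 1) * log 16) = (l1 - l0) ^ 2 / (4 * l0 * (1 - l0) * log 2) := by
    have h16 : log 16 = 4 * log 2 := by
      rw [show (16 : ℝ) = 2 ^ 4 by norm_num, log_pow]
      norm_num
    have hexp : exp τ = l0⁻¹ := by simp [l0, exp_neg]
    rw [hl1, h16, hexp]
    field_simp
  simp only [hr, hlimit]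
  exact (HybridBB84.tendsto_keyRate_div_sq l0 l1 hl0.ne' hl0_lt.ne
    (by rw [← sub_ne_zero, hl1]; positivity)).mono_left (nhdsGT_le_nhdsNE 0)
end

section
/- Define λ_n(τ) := e^{−τ} Σ_{k=0}^{n} τ^k/k!. Suppose τ > ln 2, so that λ₀(τ) = e^{−τ} < 1/2. Then for all natural numbers a, b: λ_a(τ) + λ_b(τ) − 2·λ_a(τ)·λ_b(τ) < 1 − λ₀(τ), and moreover the supremum over all pairs (a, b) ∈ ℕ × ℕ of λ_a(τ) + λ_b(τ) − 2λ_a(τ)λ_b(τ) equals 1 − λ₀(τ). -/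
/-!
Since λ_n(τ) = e^{−τ} Σ_{k≤n} τ^k/k! is the distribution function of a Poisson law, it increases
strictly from λ₀ = e^{−τ} to its limit 1. On the square [λ₀, 1)² the function x + y − 2xy stays
below its value 1 − λ₀ at the corner (1, λ₀) once λ₀ < 1/2, and approaches it along (λ_a, λ₀).
-/

/-- The eigenvalues λ_n(τ) := e^{−τ} Σ_{k=0}^{n} τ^k/k! of the threshold-detection
operator R₁ in the number basis. -/
noncomputable def lam (n : ℕ) (τ : ℝ) : ℝ :=
  Real.exp (-τ) * ∑ k ∈ Finset.range (n + 1), τ ^ k / k.factorial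

open Filter Topology Finset Real

-- x + y − 2xy = (1 − (1 − 2x)(1 − 2y)) / 2, and both factors lie in (−1, 1 − 2L].
theorem add_sub_two_mul_lt_one_sub {L x y : ℝ} (hL : L < 1 / 2) (hx : L ≤ x) (hy : L ≤ y)
    (hx1 : x < 1) (hy1 : y < 1) : x + y - 2 * x * y < 1 - L := by
  have hprod : -(1 - 2 * L) < (1 - 2 * x) * (1 - 2 * y) := by
    rcases le_total x (1 / 2) with hx2 | hx2 <;> rcases le_total y (1 / 2) with hy2 | hy2
    all_goals nlinarith
  linarith

theorem iSup_add_sub_two_mul_eq_one_sub {s : ℕ → ℝ} (hs0 : s 0 < 1 / 2) (hmono : Monotone s)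
    (hlt : ∀ n, s n < 1) (hlim : Tendsto s atTop (𝓝 1)) :
    ⨆ p : ℕ × ℕ, (s p.1 + s p.2 - 2 * s p.1 * s p.2) = 1 - s 0 := by
  have hbound (p : ℕ × ℕ) : s p.1 + s p.2 - 2 * s p.1 * s p.2 ≤ 1 - s 0 :=
    (add_sub_two_mul_lt_one_sub hs0 (hmono p.1.zero_le) (hmono p.2.zero_le) (hlt _) (hlt _)).le
  refine le_antisymm (ciSup_le hbound) ?_
  have hedge : Tendsto (fun n => s n + s 0 - 2 * s n * s 0) atTop (𝓝 (1 - s 0)) := by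
    convert (hlim.add_const (s 0)).sub ((hlim.const_mul 2).mul_const (s 0)) using 2
    ring
  exact le_of_tendsto hedge <| .of_forall fun n =>
    le_ciSup (f := fun p : ℕ × ℕ => s p.1 + s p.2 - 2 * s p.1 * s p.2)
      ⟨1 - s 0, Set.forall_mem_range.2 hbound⟩ (n, 0)

theorem lam_zero (τ : ℝ) : lam 0 τ = exp (-τ) := by simp [lam]

theorem lam_succ (n : ℕ) (τ : ℝ) :
    lam (n + 1) τ = lam n τ + exp (-τ) * (τ ^ (n + 1) / (n + 1).factorial) := by
  rw [lam, sum_range_succ, mul_add, lam]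

theorem lam_strictMono {τ : ℝ} (hτ : 0 < τ) : StrictMono (lam · τ) :=
  strictMono_nat_of_lt_succ fun n => by rw [lam_succ]; exact lt_add_of_pos_right _ (by positivity)

theorem tendsto_lam (τ : ℝ) : Tendsto (lam · τ) atTop (𝓝 1) := by
  have hexp : Tendsto (fun n => ∑ k ∈ range n, τ ^ k / k.factorial) atTop (𝓝 (exp τ)) := by
    rw [exp_eq_exp_ℝ]
    exact (NormedSpace.expSeries_div_hasSum_exp τ).tendsto_sum_nat
  simpa [lam, ← exp_add] using ((tendsto_add_atTop_iff_nat 1).2 hexp).const_mul (exp (-τ))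

theorem lam_lt_one {τ : ℝ} (hτ : 0 < τ) (n : ℕ) : lam n τ < 1 :=
  (lam_strictMono hτ n.lt_succ_self).trans_le <|
    (lam_strictMono hτ).monotone.ge_of_tendsto (tendsto_lam τ) _

theorem lam_zero_lt_half {τ : ℝ} (hτ : log 2 < τ) : lam 0 τ < 1 / 2 := by
  calc lam 0 τ = exp (-τ) := lam_zero τ
    _ < exp (-log 2) := exp_lt_exp.2 (neg_lt_neg hτ)
    _ = 1 / 2 := by rw [exp_neg, exp_log two_pos, one_div]

/-- If τ > ln 2 (so λ₀ < 1/2), then for all a, b ∈ ℕ,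
λ_a + λ_b − 2λ_aλ_b < 1 − λ₀, and the supremum over all pairs equals 1 − λ₀. -/
theorem gain_eigenvalues_range (τ : ℝ) (hτ : Real.log 2 < τ) :
    (∀ a b : ℕ, lam a τ + lam b τ - 2 * lam a τ * lam b τ < 1 - lam 0 τ)
    ∧ (⨆ p : ℕ × ℕ, (lam p.1 τ + lam p.2 τ - 2 * lam p.1 τ * lam p.2 τ)) = 1 - lam 0 τ := by
  have hτ0 : 0 < τ := (log_pos one_lt_two).trans hτ
  have hmono : Monotone (lam · τ) := (lam_strictMono hτ0).monotone
  refine ⟨fun a b => ?_, iSup_add_sub_two_mul_eq_one_sub (lam_zero_lt_half hτ) hmono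
    (lam_lt_one hτ0) (tendsto_lam τ)⟩
  exact add_sub_two_mul_lt_one_sub (lam_zero_lt_half hτ) (hmono a.zero_le) (hmono b.zero_le)
    (lam_lt_one hτ0 a) (lam_lt_one hτ0 b)
end

section
/- Fix τ > 0 and a real parameter E_d, and set λ₀ = e^{−τ}, λ₁ = (1+τ)e^{−τ} and f = 1 − 3E_d/2. Then (1/3)·(λ₀ + 2λ₁ − 3λ₀λ₁ − 2f(λ₁ − λ₀))/(λ₀ + λ₁ − 2λ₀λ₁) = ((E_d·τ + 1)e^{−τ} − (τ+1)e^{−2τ})/((τ+2)e^{−τ} − 2(τ+1)e^{−2τ}). In particular, the value of f solving E₁(f) = E₁^{Qi}(E_d, τ) is f = 1 − 3E_d/2, independent of the threshold τ. -/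
/-- With λ₀ = e^{−τ}, λ₁ = (1+τ)e^{−τ} and f = 1 − 3E_d/2, the conditional QBER
E₁(f) = (1/3)(λ₀ + 2λ₁ − 3λ₀λ₁ − 2f(λ₁−λ₀))/(λ₀ + λ₁ − 2λ₀λ₁) equals Qi's single-photon QBER
E₁^{Qi} = ((E_dτ + 1)e^{−τ} − (τ+1)e^{−2τ})/((τ+2)e^{−τ} − 2(τ+1)e^{−2τ}); in particular the
solution of E₁(f) = E₁^{Qi} is f = 1 − 3E_d/2, independent of τ. -/
theorem qber_matching_Qi (τ Ed : ℝ) (hτ : 0 < τ) :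
    let l0 : ℝ := Real.exp (-τ)
    let l1 : ℝ := (1 + τ) * Real.exp (-τ)
    let f : ℝ := 1 - 3 * Ed / 2
    (1 / 3) * (l0 + 2 * l1 - 3 * l0 * l1 - 2 * f * (l1 - l0)) / (l0 + l1 - 2 * l0 * l1)
      = ((Ed * τ + 1) * Real.exp (-τ) - (τ + 1) * Real.exp (-2 * τ)) /
        ((τ + 2) * Real.exp (-τ) - 2 * (τ + 1) * Real.exp (-2 * τ)) := by
  intro l0 l1 f
  set a : ℝ := Real.exp (-τ) with ha_def
  have ha : (0:ℝ) < a := Real.exp_pos _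
  have h2 : Real.exp (-2 * τ) = a * a := by
    rw [ha_def, ← Real.exp_add]; ring_nf
  have hprod : a * Real.exp τ = 1 := by
    rw [ha_def, ← Real.exp_add]; simp
  have hexp : τ + 1 < Real.exp τ := Real.add_one_lt_exp (ne_of_gt hτ)
  have hlt : (1 + τ) * a < 1 := by nlinarith
  have hden : a + (1 + τ) * a - 2 * a * ((1 + τ) * a) ≠ 0 := by nlinarith
  have hden2 : (τ + 2) * a - 2 * (τ + 1) * (a * a) ≠ 0 := by nlinarith
  show (1 / 3) * (a + 2 * ((1 + τ) * a) - 3 * a * ((1 + τ) * a)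
        - 2 * (1 - 3 * Ed / 2) * ((1 + τ) * a - a)) / (a + (1 + τ) * a - 2 * a * ((1 + τ) * a))
      = ((Ed * τ + 1) * a - (τ + 1) * Real.exp (-2 * τ)) /
        ((τ + 2) * a - 2 * (τ + 1) * Real.exp (-2 * τ))
  rw [h2]
  field_simp
  ring
end

section
/- For every natural number m ≥ 1 and every real N > 0, the integral over the complex plane (1/(π·N·m!)) · ∫_ℂ ‖z‖^{2(m−1)} · (m − ‖z‖²)² · e^{−((N+1)/N)·‖z‖²} dz (with respect to Lebesgue measure on ℂ) equals (N/(N+1))^m · (m + N²)/(N·(N+1)²). -/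
/-!
The integrand is radial, so polar coordinates reduce it to Gamma integrals: with `b = (N+1)/N`,
`∫_ℂ |z|^{2j} e^{-b|z|²} dz = π j! / b^{j+1}`. Expanding `(m - |z|²)²` leaves three such moments,
and with `q = 1/b = N/(N+1)` the sum is `q^m (m (1 - q)² + q²) / N`, where
`m (1 - q)² + q² = (m + N²)/(N + 1)²`.
-/

open MeasureTheory Real Set
open scoped Nat

lemma integral_Ioi_odd_pow_mul_exp_neg_mul_sq (j : ℕ) {b : ℝ} (hb : 0 < b) :
    ∫ r in Ioi (0 : ℝ), r ^ (2 * j + 1) * exp (-b * r ^ 2) = j ! / (2 * b ^ (j + 1)) := by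
  have h := integral_rpow_mul_exp_neg_mul_rpow (p := 2) (q := ((2 * j + 1 : ℕ) : ℝ))
    two_pos (by linarith [(Nat.cast_nonneg (2 * j + 1) : (0 : ℝ) ≤ _)]) hb
  simp only [rpow_natCast, rpow_two] at h
  rw [h, show (-(((2 * j + 1 : ℕ) : ℝ) + 1) / 2) = -((j + 1 : ℕ) : ℝ) by push_cast; ring,
    show (((2 * j + 1 : ℕ) : ℝ) + 1) / 2 = j + 1 by push_cast; ring,
    rpow_neg hb.le, rpow_natCast, Gamma_nat_eq_factorial]
  field_simp

lemma integrableOn_Ioi_odd_pow_mul_exp_neg_mul_sq (j : ℕ) {b : ℝ} (hb : 0 < b) :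
    IntegrableOn (fun r : ℝ ↦ r ^ (2 * j + 1) * exp (-b * r ^ 2)) (Ioi 0) := by
  simpa only [rpow_natCast] using integrableOn_rpow_mul_exp_neg_mul_sq hb
    (s := ((2 * j + 1 : ℕ) : ℝ)) (by linarith [(Nat.cast_nonneg (2 * j + 1) : (0 : ℝ) ≤ _)])

namespace Complex

variable {E : Type*} [NormedAddCommGroup E] [NormedSpace ℝ E]

theorem integral_fun_norm (f : ℝ → E) :
    ∫ z : ℂ, f ‖z‖ = (2 * π) • ∫ r in Ioi (0 : ℝ), r • f r := by
  rw [integral_fun_norm_addHaar volume f, finrank_real_complex, measureReal_def, volume_ball]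
  simp only [ENNReal.ofReal_one, one_pow, one_mul, ENNReal.coe_toReal, NNReal.coe_real_pi,
    Nat.add_one_sub_one, pow_one]
  rw [mul_smul, ← Nat.cast_smul_eq_nsmul ℝ, Nat.cast_ofNat]

theorem integrable_fun_norm_iff {f : ℝ → E} :
    Integrable (fun z : ℂ ↦ f ‖z‖) ↔ IntegrableOn (fun r ↦ r • f r) (Ioi 0) := by
  rw [integrable_fun_norm_addHaar volume, finrank_real_complex]
  simp

theorem integral_norm_pow_mul_exp_neg_mul_sq (j : ℕ) {b : ℝ} (hb : 0 < b) :
    ∫ z : ℂ, ‖z‖ ^ (2 * j) * Real.exp (-b * ‖z‖ ^ 2) = π * j ! / b ^ (j + 1) := by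
  rw [integral_fun_norm (fun r ↦ r ^ (2 * j) * Real.exp (-b * r ^ 2))]
  simp_rw [smul_eq_mul, ← mul_assoc, ← pow_succ']
  rw [integral_Ioi_odd_pow_mul_exp_neg_mul_sq j hb]
  field_simp

theorem integrable_norm_pow_mul_exp_neg_mul_sq (j : ℕ) {b : ℝ} (hb : 0 < b) :
    Integrable (fun z : ℂ ↦ ‖z‖ ^ (2 * j) * Real.exp (-b * ‖z‖ ^ 2)) := by
  rw [integrable_fun_norm_iff (f := fun r ↦ r ^ (2 * j) * Real.exp (-b * r ^ 2))]
  simp_rw [smul_eq_mul, ← mul_assoc, ← pow_succ']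
  exact integrableOn_Ioi_odd_pow_mul_exp_neg_mul_sq j hb

end Complex

/-- for every m ≥ 1 and N > 0,
(1/(πN·m!)) ∫_ℂ ‖z‖^{2(m−1)} (m − ‖z‖²)² e^{−((N+1)/N)‖z‖²} dz
  = (N/(N+1))^m (m + N²)/(N(N+1)²). -/
theorem gaussian_noise_pm (m : ℕ) (hm : 1 ≤ m) (N : ℝ) (hN : 0 < N) :
    (1 / (Real.pi * N * m.factorial)) *
        ∫ z : ℂ, ‖z‖ ^ (2 * (m - 1)) * ((m : ℝ) - ‖z‖ ^ 2) ^ 2 *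
          Real.exp (-((N + 1) / N) * ‖z‖ ^ 2) =
      (N / (N + 1)) ^ m * ((m : ℝ) + N ^ 2) / (N * (N + 1) ^ 2) := by
  obtain ⟨k, rfl⟩ : ∃ k, m = k + 1 := ⟨m - 1, by omega⟩
  have hb : 0 < (N + 1) / N := by positivity
  set g : ℕ → ℂ → ℝ := fun j z ↦ ‖z‖ ^ (2 * j) * Real.exp (-((N + 1) / N) * ‖z‖ ^ 2)
  have hg (j : ℕ) : Integrable (g j) := Complex.integrable_norm_pow_mul_exp_neg_mul_sq j hb
  have hg_integral (j : ℕ) : ∫ z, g j z = π * j ! * (N / (N + 1)) ^ (j + 1) := by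
    rw [Complex.integral_norm_pow_mul_exp_neg_mul_sq j hb, ← inv_div N, inv_pow, div_inv_eq_mul]
  have hexpand : (fun z : ℂ ↦ ‖z‖ ^ (2 * (k + 1 - 1)) * (((k + 1 : ℕ) : ℝ) - ‖z‖ ^ 2) ^ 2 *
      Real.exp (-((N + 1) / N) * ‖z‖ ^ 2)) =
      fun z ↦ ((k + 1 : ℕ) : ℝ) ^ 2 * g k z - 2 * (k + 1 : ℕ) * g (k + 1) z + g (k + 2) z := by
    ext z
    simp only [g, Nat.add_sub_cancel]
    ring
  have hfirst : Integrable fun z ↦ ((k + 1 : ℕ) : ℝ) ^ 2 * g k z := (hg k).const_mul _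
  have hsecond : Integrable fun z ↦ 2 * ((k + 1 : ℕ) : ℝ) * g (k + 1) z :=
    (hg (k + 1)).const_mul _
  rw [hexpand, integral_add (by exact hfirst.sub hsecond) (hg (k + 2)),
    integral_sub hfirst hsecond, integral_const_mul, integral_const_mul]
  simp only [hg_integral, pow_succ, Nat.factorial_succ]
  generalize (N / (N + 1)) ^ k = p
  push_cast
  field_simp
  ring
end

section
/- For every natural number m and every real N > 0, the integral over the complex plane (1/(π·N·√((m+1)!·m!))) · ∫_ℂ ‖z‖^{2m} · (m + 1 − ‖z‖²) · e^{−((N+1)/N)·‖z‖²} dz (with respect to Lebesgue measure on ℂ) equals √(m+1) · (N/(N+1))^m / (N+1)². -/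
/-!
Integrating in polar coordinates and substituting `r² = t` turns the Gaussian moments on `ℂ` into
Gamma integrals: `∫ ‖z‖^(2k) e^(-c‖z‖²) dz = π k! / c^(k+1)`. The integrand is `m + 1` times the
`m`-th moment minus the `(m+1)`-st, so the integral is `π (m+1)! (c - 1) / c^(m+2)`. For
`c = (N+1)/N` we have `c - 1 = 1/N`, and `√((m+1)! m!) = √(m+1) m!` gives the normalisation.
-/

open MeasureTheory Real Set
open scoped Nat

theorem Complex.integral_fun_norm_s17 (f : ℝ → ℝ) :
    ∫ z : ℂ, f ‖z‖ = 2 * π * ∫ r in Ioi (0 : ℝ), r * f r := by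
  rw [integral_fun_norm_addHaar volume f, Complex.finrank_real_complex, measureReal_def,
    Complex.volume_ball]
  simp [mul_assoc]

theorem integral_Ioi_pow_odd_mul_exp_neg_mul_sq (k : ℕ) {c : ℝ} (hc : 0 < c) :
    ∫ r in Ioi (0 : ℝ), r ^ (2 * k + 1) * Real.exp (-c * r ^ 2) = k ! / (2 * c ^ (k + 1)) := by
  have h := integral_rpow_mul_exp_neg_mul_rpow (p := 2) (q := (2 * k + 1 : ℕ)) two_pos
    (neg_one_lt_zero.trans_le (Nat.cast_nonneg _)) hc
  have hexp : ((((2 * k + 1 : ℕ) : ℝ) + 1) / 2) = (k + 1 : ℕ) := by push_cast; ring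
  rw [neg_div, hexp, rpow_neg hc.le, rpow_natCast, Nat.cast_succ k, Gamma_nat_eq_factorial] at h
  simp_rw [rpow_natCast, rpow_two] at h
  rw [h]
  field_simp

theorem Complex.integral_norm_pow_mul_exp_neg_mul_sq_s17 (k : ℕ) {c : ℝ} (hc : 0 < c) :
    ∫ z : ℂ, ‖z‖ ^ (2 * k) * Real.exp (-c * ‖z‖ ^ 2) = π * k ! / c ^ (k + 1) := by
  rw [Complex.integral_fun_norm_s17 (fun r ↦ r ^ (2 * k) * Real.exp (-c * r ^ 2))]
  have hodd : ∀ r : ℝ, r * (r ^ (2 * k) * Real.exp (-c * r ^ 2))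
      = r ^ (2 * k + 1) * Real.exp (-c * r ^ 2) := fun r ↦ by ring
  simp_rw [hodd, integral_Ioi_pow_odd_mul_exp_neg_mul_sq k hc]
  field_simp

theorem Complex.integral_norm_pow_mul_sub_mul_exp_neg_mul_sq (m : ℕ) {c : ℝ} (hc : 0 < c) :
    ∫ z : ℂ, ‖z‖ ^ (2 * m) * ((m : ℝ) + 1 - ‖z‖ ^ 2) * Real.exp (-c * ‖z‖ ^ 2) =
      π * (m + 1)! * (c - 1) / c ^ (m + 2) := by
  have hint (k : ℕ) : Integrable fun z : ℂ ↦ ‖z‖ ^ (2 * k) * Real.exp (-c * ‖z‖ ^ 2) :=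
    .of_integral_ne_zero <| by
      rw [Complex.integral_norm_pow_mul_exp_neg_mul_sq_s17 k hc]; positivity
  have hsplit : ∀ z : ℂ, ‖z‖ ^ (2 * m) * ((m : ℝ) + 1 - ‖z‖ ^ 2) * Real.exp (-c * ‖z‖ ^ 2) =
      (m + 1) * (‖z‖ ^ (2 * m) * Real.exp (-c * ‖z‖ ^ 2))
        - ‖z‖ ^ (2 * (m + 1)) * Real.exp (-c * ‖z‖ ^ 2) := fun z ↦ by ring
  simp_rw [hsplit]
  rw [integral_sub ((hint m).const_mul _) (hint (m + 1)), integral_const_mul,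
    Complex.integral_norm_pow_mul_exp_neg_mul_sq_s17 m hc,
    Complex.integral_norm_pow_mul_exp_neg_mul_sq_s17 (m + 1) hc, Nat.factorial_succ]
  push_cast
  field_simp
  ring

theorem Real.sqrt_factorial_succ_mul_factorial (m : ℕ) :
    √(((m + 1)! : ℝ) * m !) = √((m : ℝ) + 1) * m ! := by
  rw [Nat.factorial_succ, Nat.cast_mul, Nat.cast_succ, mul_assoc, sqrt_mul (by positivity),
    sqrt_mul_self (by positivity)]

/-- for every m ∈ ℕ and N > 0,
(1/(πN·√((m+1)!·m!))) ∫_ℂ ‖z‖^{2m} (m + 1 − ‖z‖²) e^{−((N+1)/N)‖z‖²} dz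
  = √(m+1) (N/(N+1))^m / (N+1)². -/
theorem gaussian_noise_tm (m : ℕ) (N : ℝ) (hN : 0 < N) :
    (1 / (Real.pi * N * Real.sqrt ((m + 1).factorial * m.factorial))) *
        ∫ z : ℂ, ‖z‖ ^ (2 * m) * ((m : ℝ) + 1 - ‖z‖ ^ 2) *
          Real.exp (-((N + 1) / N) * ‖z‖ ^ 2) =
      Real.sqrt ((m : ℝ) + 1) * (N / (N + 1)) ^ m / (N + 1) ^ 2 := by
  rw [Complex.integral_norm_pow_mul_sub_mul_exp_neg_mul_sq m (by positivity),
    Real.sqrt_factorial_succ_mul_factorial, Nat.factorial_succ]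
  have hc_sub_one : (N + 1) / N - 1 = 1 / N := by field_simp; ring
  have hsqrt : √((m : ℝ) + 1) ^ 2 = m + 1 := sq_sqrt (by positivity)
  rw [hc_sub_one, div_pow, div_pow]
  push_cast
  field_simp
  rw [hsqrt]
  ring
end

section
/- Let η ∈ [0, 1] and N > 0 be real numbers. Set p₀ = N/(N+1)², p₁ = (1+N²)/(N+1)³, t₀ = 1/(N+1)², P₁ = (η/(N+1))·(p₀·N/(N+1) + p₁) + 2(1−η)·N/(N+1)³, and f₁ = (2η + N² − ηN + N)/(2(η + 2N² − 2ηN + 2N)). Let A be the 4×4 real matrix (η/2)·[[p₁/(N+1), 0, 0, t₀²], [0, p₀·N/(N+1)², 0, 0], [0, 0, p₀·N/(N+1)², 0], [t₀², 0, 0, p₁/(N+1)]] + ((1−η)/2)·(N/(N+1)³)·I₄. Then A = P₁ · M(f₁), where M(f) = (1/6)·[[2f+1, 0, 0, 4f−1], [0, 2(1−f), 0, 0], [0, 0, 2(1−f), 0], [4f−1, 0, 0, 2f+1]]. -/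
open Matrix

/-!
Both sides lie in the three-dimensional space of matrices
`!![a, 0, 0, b; 0, c, 0, 0; 0, 0, c, 0; b, 0, 0, a]`, which contains the identity and is closed under
addition and scaling, so the identity reduces to three scalar equations. These are linear in `P₁`
and `P₁ f₁`, and with `D = η + 2N² - 2ηN + 2N > 0` one has `P₁ = D / (N+1)⁴` (the trace of `A`)
and `P₁ f₁ = (2η + N² - ηN + N) / (2 (N+1)⁴)`.
-/

def xShaped {R : Type*} [Zero R] (a b c : R) : Matrix (Fin 4) (Fin 4) R :=
  !![a, 0, 0, b; 0, c, 0, 0; 0, 0, c, 0; b, 0, 0, a]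

section

variable {R : Type*} [Semiring R]

theorem smul_xShaped (r a b c : R) : r • xShaped a b c = xShaped (r * a) (r * b) (r * c) := by
  ext i j
  fin_cases i <;> fin_cases j <;> simp [xShaped]

theorem xShaped_add_xShaped (a b c a' b' c' : R) :
    xShaped a b c + xShaped a' b' c' = xShaped (a + a') (b + b') (c + c') := by
  ext i j
  fin_cases i <;> fin_cases j <;> simp [xShaped]

theorem one_eq_xShaped : (1 : Matrix (Fin 4) (Fin 4) R) = xShaped 1 0 1 := by
  ext i j
  fin_cases i <;> fin_cases j <;> simp [xShaped, one_apply]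

end

theorem lossNoise_weight_numerator_pos {η N : ℝ} (hη : η ∈ Set.Icc (0 : ℝ) 1) (hN : 0 < N) :
    0 < η + 2 * N ^ 2 - 2 * η * N + 2 * N := by
  nlinarith [hη.1, hη.2]

/-- the one-photon-sector block of the Alice–Bob state after pure loss η
followed by mode-wise Gaussian noise of variance N equals P₁·M(f₁), with p₀, p₁, t₀, P₁, f₁
as specified and M(f) the one-parameter family of invariant two-qubit states. -/
theorem gaussian_noise_one_photon_invariant (η N : ℝ) (hη : η ∈ Set.Icc (0 : ℝ) 1)
    (hN : 0 < N) :
    let p0 : ℝ := N / (N + 1) ^ 2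
    let p1 : ℝ := (1 + N ^ 2) / (N + 1) ^ 3
    let t0 : ℝ := 1 / (N + 1) ^ 2
    let P1 : ℝ := (η / (N + 1)) * (p0 * N / (N + 1) + p1) + 2 * (1 - η) * N / (N + 1) ^ 3
    let f1 : ℝ := (2 * η + N ^ 2 - η * N + N) / (2 * (η + 2 * N ^ 2 - 2 * η * N + 2 * N))
    let M : ℝ → Matrix (Fin 4) (Fin 4) ℝ := fun f =>
      (1 / 6 : ℝ) • !![2 * f + 1, 0, 0, 4 * f - 1;
                       0, 2 * (1 - f), 0, 0;
                       0, 0, 2 * (1 - f), 0;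
                       4 * f - 1, 0, 0, 2 * f + 1]
    let A : Matrix (Fin 4) (Fin 4) ℝ :=
      (η / 2) • !![p1 / (N + 1), 0, 0, t0 ^ 2;
                   0, p0 * N / (N + 1) ^ 2, 0, 0;
                   0, 0, p0 * N / (N + 1) ^ 2, 0;
                   t0 ^ 2, 0, 0, p1 / (N + 1)]
        + ((1 - η) / 2 * (N / (N + 1) ^ 3)) • (1 : Matrix (Fin 4) (Fin 4) ℝ)
    A = P1 • M f1 := by
  intro p0 p1 t0 P1 f1 M A
  set D := η + 2 * N ^ 2 - 2 * η * N + 2 * N with hD_def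
  have hD : D ≠ 0 := (lossNoise_weight_numerator_pos hη hN).ne'
  have hP1 : P1 = D / (N + 1) ^ 4 := by
    simp only [P1, p0, p1, hD_def]
    field_simp
    ring
  have hP1f1 : P1 * f1 = (2 * η + N ^ 2 - η * N + N) / (2 * (N + 1) ^ 4) := by
    rw [hP1]
    simp only [f1, ← hD_def]
    field_simp
  show (η / 2) • xShaped (p1 / (N + 1)) (t0 ^ 2) (p0 * N / (N + 1) ^ 2) + _ • 1
    = P1 • ((1 / 6 : ℝ) • xShaped (2 * f1 + 1) (4 * f1 - 1) (2 * (1 - f1)))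
  rw [one_eq_xShaped, smul_xShaped, smul_xShaped, smul_xShaped, smul_xShaped, xShaped_add_xShaped]
  congr 1
  · simp only [p1]
    linear_combination (norm := (field_simp; ring)) (-1 / 3 : ℝ) * hP1f1 + (-1 / 6 : ℝ) * hP1
  · simp only [t0]
    linear_combination (norm := (field_simp; ring)) (-2 / 3 : ℝ) * hP1f1 + (1 / 6 : ℝ) * hP1
  · simp only [p0]
    linear_combination (norm := (field_simp; ring)) (1 / 3 : ℝ) * hP1f1 + (-1 / 3 : ℝ) * hP1
end
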